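/- Suppose a local system of rank $n$ on a disc $U$ with coordinate $z$ is given by the kernel of a holomorphic connection $\nabla = d + A(z)dz$ on the trivial bundle $\mathcal{O}_U^n$, and let $s$ be a nowhere-vanishing holomorphic section of a line subbundle $L \subset \mathcal{O}_U^n$, written as $i(s) = \sum_j a_j(z)\mathbf{e}_j$ in a flat frame $(\mathbf{e}_j)$. If the Wronskian $\operatorname{Wr}(a_1,\dots,a_n)$ vanishes identically, then the dual connection admits a nonzero flat local section annihilating $i(s)$; in particular $(E^\vee, \nabla^\vee)$ has a proper nonzero flat subspace of constant sections pairing to zero with $L$, so $(E,\nabla)$ is reducible. -/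

import Mathlib

/-!
Induction on the number of functions. If the Wronskian of `a₀, …, a_{m-1}` vanishes identically,
induction applies. Otherwise it is nonzero on a connected open set `V`. There the vanishing of
the full Wronskian writes the row `(a_m⁽ᵏ⁾)_{k ≤ m}` as a combination `∑ cᵢ(z) (aᵢ⁽ᵏ⁾)_{k ≤ m}` of
the other rows, with coefficients `cᵢ` analytic by Cramer's rule. Differentiating the relations of
order `k < m` and comparing with those of order `k + 1` gives `∑ cᵢ' aᵢ⁽ᵏ⁾ = 0`, so `c' = 0`: the
`cᵢ` are constant, and `a_m = ∑ cᵢ aᵢ` on `V`, hence on `U` by the identity theorem.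
-/

open Matrix Filter Topology

theorem Matrix.exists_vecMul_eq_last_row {K : Type*} [Field K] {m : ℕ}
    {A : Matrix (Fin (m + 1)) (Fin (m + 1)) K} (hA : A.det = 0)
    (hA' : (A.submatrix Fin.castSucc Fin.castSucc).det ≠ 0) :
    ∃ e : Fin m → K, e ᵥ* A.submatrix Fin.castSucc id = A (Fin.last m) := by
  have hdep : ¬ LinearIndependent K (Fin.snoc (Fin.init A.row) (A.row (Fin.last m))) := by
    rw [Fin.snoc_init_self, linearIndependent_rows_iff_isUnit, isUnit_iff_isUnit_det, hA]
    exact not_isUnit_zero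
  have hind : LinearIndependent K (Fin.init A.row) :=
    .of_comp (LinearMap.funLeft K K Fin.castSucc) <|
      linearIndependent_rows_iff_isUnit.2 ((isUnit_iff_isUnit_det _).2 hA'.isUnit)
  rw [linearIndependent_finSnoc, not_and_not_right] at hdep
  obtain ⟨e, he⟩ := (Submodule.mem_span_range_iff_exists_fun K).1 (hdep hind)
  exact ⟨e, by rw [vecMul_eq_sum]; exact he⟩

section MatrixAnalytic

variable {𝕜 E ι : Type*} [NontriviallyNormedField 𝕜] [NormedAddCommGroup E] [NormedSpace 𝕜 E]
  [Fintype ι] [DecidableEq ι] {s : Set E} {N : E → Matrix ι ι 𝕜}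

theorem analyticOnNhd_det (hN : ∀ i j, AnalyticOnNhd 𝕜 (fun z => N z i j) s) :
    AnalyticOnNhd 𝕜 (fun z => (N z).det) s := by
  simp only [det_apply']
  exact Finset.analyticOnNhd_fun_sum _ fun σ _ =>
    analyticOnNhd_const.mul (Finset.analyticOnNhd_fun_prod _ fun i _ => hN (σ i) i)

theorem analyticOnNhd_vecMul_inv {b : E → ι → 𝕜}
    (hN : ∀ i j, AnalyticOnNhd 𝕜 (fun z => N z i j) s)
    (hb : ∀ i, AnalyticOnNhd 𝕜 (fun z => b z i) s) (hdet : ∀ z ∈ s, (N z).det ≠ 0) (i : ι) :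
    AnalyticOnNhd 𝕜 (fun z => (b z ᵥ* (N z)⁻¹) i) s := by
  have cramer_rule : ∀ z, (b z ᵥ* (N z)⁻¹) i = (N z).det⁻¹ * ((N z).updateRow i (b z)).det := by
    intro z
    rw [inv_def, Ring.inverse_eq_inv', vecMul_smul, ← mulVec_transpose, adjugate_transpose,
      ← cramer_eq_adjugate_mulVec, Pi.smul_apply, cramer_transpose_apply, smul_eq_mul]
  simp only [cramer_rule]
  refine ((analyticOnNhd_det hN).inv hdet).mul (analyticOnNhd_det fun k l => ?_)
  simp only [updateRow_apply]
  split_ifs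
  exacts [hb l, hN k l]

end MatrixAnalytic

theorem AnalyticOnNhd.iteratedDeriv {𝕜 : Type*} [NontriviallyNormedField 𝕜] [CompleteSpace 𝕜]
    {f : 𝕜 → 𝕜} {s : Set 𝕜} (hf : AnalyticOnNhd 𝕜 f s) (k : ℕ) :
    AnalyticOnNhd 𝕜 (iteratedDeriv k f) s := by
  rw [iteratedDeriv_eq_iterate]
  exact hf.iterated_deriv k

theorem AnalyticAt.hasDerivAt_iteratedDeriv {𝕜 : Type*} [NontriviallyNormedField 𝕜]
    [CompleteSpace 𝕜] {f : 𝕜 → 𝕜} {z : 𝕜} (hf : AnalyticAt 𝕜 f z) (k : ℕ) :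
    HasDerivAt (iteratedDeriv k f) (iteratedDeriv (k + 1) f z) z := by
  rw [iteratedDeriv_succ, iteratedDeriv_eq_iterate]
  exact (hf.iterated_deriv k).differentiableAt.hasDerivAt

section Wronskian

variable {𝕜 : Type*} [RCLike 𝕜]

noncomputable def wronskianMatrix {ι : Type*} (f : ι → 𝕜 → 𝕜) (k : ℕ) (z : 𝕜) :
    Matrix ι (Fin k) 𝕜 :=
  of fun i j => iteratedDeriv j (f i) z

noncomputable def wronskianCoeff {m : ℕ} (a : Fin (m + 1) → 𝕜 → 𝕜) (z : 𝕜) : Fin m → 𝕜 :=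
  wronskianMatrix a m z (Fin.last m) ᵥ* (wronskianMatrix (Fin.init a) m z)⁻¹

theorem analyticOnNhd_wronskianMatrix {ι : Type*} {f : ι → 𝕜 → 𝕜} {s : Set 𝕜}
    (hf : ∀ i, AnalyticOnNhd 𝕜 (f i) s) (k : ℕ) (i : ι) (j : Fin k) :
    AnalyticOnNhd 𝕜 (fun z => wronskianMatrix f k z i j) s :=
  (hf i).iteratedDeriv j

section Coefficients

variable {m : ℕ} {a : Fin (m + 1) → 𝕜 → 𝕜} {V : Set 𝕜} {z : 𝕜}

theorem sum_wronskianCoeff_mul_iteratedDeriv (hW : (wronskianMatrix a (m + 1) z).det = 0)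
    (hW' : (wronskianMatrix (Fin.init a) m z).det ≠ 0) {k : ℕ} (hk : k ≤ m) :
    ∑ i, wronskianCoeff a z i * iteratedDeriv k (a i.castSucc) z =
      iteratedDeriv k (a (Fin.last m)) z := by
  obtain ⟨e, he⟩ := exists_vecMul_eq_last_row hW hW'
  have he' : e ᵥ* wronskianMatrix (Fin.init a) m z = wronskianMatrix a m z (Fin.last m) :=
    funext fun j => congrFun he j.castSucc
  have he_eq : e = wronskianCoeff a z := by
    rw [wronskianCoeff, ← he', vecMul_vecMul, mul_nonsing_inv _ hW'.isUnit, vecMul_one]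
  exact he_eq ▸ congrFun he ⟨k, Nat.lt_succ_of_le hk⟩

theorem analyticOnNhd_wronskianCoeff (ha : ∀ i, AnalyticOnNhd 𝕜 (a i) V)
    (hW' : ∀ z ∈ V, (wronskianMatrix (Fin.init a) m z).det ≠ 0) (i : Fin m) :
    AnalyticOnNhd 𝕜 (fun z => wronskianCoeff a z i) V :=
  analyticOnNhd_vecMul_inv (analyticOnNhd_wronskianMatrix (f := Fin.init a) (fun _ => ha _) m)
    (analyticOnNhd_wronskianMatrix ha m _) hW' i

theorem deriv_wronskianCoeff_eq_zero (hV : IsOpen V) (ha : ∀ i, AnalyticOnNhd 𝕜 (a i) V)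
    (hW : ∀ z ∈ V, (wronskianMatrix a (m + 1) z).det = 0)
    (hW' : ∀ z ∈ V, (wronskianMatrix (Fin.init a) m z).det ≠ 0) (hz : z ∈ V) (i : Fin m) :
    deriv (fun w => wronskianCoeff a w i) z = 0 := by
  set c' : Fin m → 𝕜 := fun i => deriv (fun w => wronskianCoeff a w i) z
  suffices c' ᵥ* wronskianMatrix (Fin.init a) m z = 0 from
    congrFun (vecMul_injective_iff_isUnit.2 ((isUnit_iff_isUnit_det _).2 (hW' z hz).isUnit)
      (this.trans (zero_vecMul _).symm)) i
  funext k
  have hrel : (fun w => ∑ i, wronskianCoeff a w i * iteratedDeriv k (a i.castSucc) w)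
      =ᶠ[𝓝 z] iteratedDeriv k (a (Fin.last m)) :=
    eventually_of_mem (hV.mem_nhds hz) fun w hw =>
      sum_wronskianCoeff_mul_iteratedDeriv (hW w hw) (hW' w hw) k.is_lt.le
  have hsum := HasDerivAt.fun_sum (u := Finset.univ) fun i _ =>
    ((analyticOnNhd_wronskianCoeff ha hW' i z hz).differentiableAt.hasDerivAt).mul
      ((ha i.castSucc z hz).hasDerivAt_iteratedDeriv k)
  have hderiv := (hsum.congr_of_eventuallyEq hrel.symm).unique
    ((ha (Fin.last m) z hz).hasDerivAt_iteratedDeriv k)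
  rw [Finset.sum_add_distrib,
    sum_wronskianCoeff_mul_iteratedDeriv (hW z hz) (hW' z hz) k.is_lt, add_eq_right] at hderiv
  exact hderiv

theorem sum_wronskianCoeff_mul_eq_of_isPreconnected (hV : IsOpen V) (hVc : IsPreconnected V)
    (ha : ∀ i, AnalyticOnNhd 𝕜 (a i) V) (hW : ∀ z ∈ V, (wronskianMatrix a (m + 1) z).det = 0)
    (hW' : ∀ z ∈ V, (wronskianMatrix (Fin.init a) m z).det ≠ 0) {z₀ : 𝕜} (hz₀ : z₀ ∈ V) :
    ∀ z ∈ V, ∑ i, wronskianCoeff a z₀ i * a i.castSucc z = a (Fin.last m) z := by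
  intro z hz
  have hconst : wronskianCoeff a z = wronskianCoeff a z₀ := funext fun i =>
    hV.is_const_of_deriv_eq_zero hVc (analyticOnNhd_wronskianCoeff ha hW' i).differentiableOn
      (fun w hw => deriv_wronskianCoeff_eq_zero hV ha hW hW' hw i) hz hz₀
  simpa only [hconst, iteratedDeriv_zero] using
    sum_wronskianCoeff_mul_iteratedDeriv (hW z hz) (hW' z hz) (Nat.zero_le m)

end Coefficients

theorem exists_sum_mul_eq_last_of_wronskian {m : ℕ}
    {a : Fin (m + 1) → 𝕜 → 𝕜} {U : Set 𝕜} (hU : IsOpen U) (hUc : IsPreconnected U)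
    (ha : ∀ i, AnalyticOnNhd 𝕜 (a i) U) (hW : ∀ z ∈ U, (wronskianMatrix a (m + 1) z).det = 0)
    {z₀ : 𝕜} (hz₀ : z₀ ∈ U) (hW' : (wronskianMatrix (Fin.init a) m z₀).det ≠ 0) :
    ∃ c : Fin m → 𝕜, ∀ z ∈ U, ∑ i, c i * a i.castSucc z = a (Fin.last m) z := by
  set W' := fun z => (wronskianMatrix (Fin.init a) m z).det
  set V := connectedComponentIn (U ∩ W' ⁻¹' {0}ᶜ) z₀
  have hW'an : AnalyticOnNhd 𝕜 W' U :=
    analyticOnNhd_det <| analyticOnNhd_wronskianMatrix (f := Fin.init a) (fun _ => ha _) m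
  have hV : IsOpen V :=
    (hW'an.continuousOn.isOpen_inter_preimage hU isOpen_compl_singleton).connectedComponentIn
  have hz₀V : z₀ ∈ V := mem_connectedComponentIn ⟨hz₀, hW'⟩
  have hVsub : V ⊆ U ∩ W' ⁻¹' {0}ᶜ := connectedComponentIn_subset _ _
  have hlocal := sum_wronskianCoeff_mul_eq_of_isPreconnected hV
    isPreconnected_connectedComponentIn (fun i => (ha i).mono fun z hz => (hVsub hz).1)
    (fun z hz => hW z (hVsub hz).1) (fun z hz => (hVsub hz).2) hz₀V
  exact ⟨wronskianCoeff a z₀, AnalyticOnNhd.eqOn_of_preconnected_of_eventuallyEq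
    (Finset.analyticOnNhd_fun_sum _ fun i _ => analyticOnNhd_const.mul (ha i.castSucc))
    (ha (Fin.last m)) hUc hz₀ (eventually_of_mem (hV.mem_nhds hz₀V) hlocal)⟩

theorem exists_sum_mul_eq_zero_of_wronskian_eq_zero {U : Set 𝕜}
    (hU : IsOpen U) (hUc : IsPreconnected U) (hne : U.Nonempty) :
    ∀ {n : ℕ} (a : Fin n → 𝕜 → 𝕜), (∀ i, AnalyticOnNhd 𝕜 (a i) U) →
      (∀ z ∈ U, (wronskianMatrix a n z).det = 0) →
      ∃ c : Fin n → 𝕜, c ≠ 0 ∧ ∀ z ∈ U, ∑ j, c j * a j z = 0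
  | 0, a, _, hW => by
    obtain ⟨z, hz⟩ := hne
    simpa using hW z hz
  | m + 1, a, ha, hW => by
    by_cases hW' : ∀ z ∈ U, (wronskianMatrix (Fin.init a) m z).det = 0
    · obtain ⟨c, hc, hrel⟩ :=
        exists_sum_mul_eq_zero_of_wronskian_eq_zero hU hUc hne _ (fun i => ha _) hW'
      refine ⟨Fin.snoc c 0, fun h => hc (funext fun i => by simpa using congrFun h i.castSucc),
        fun z hz => ?_⟩
      simpa [Fin.sum_univ_castSucc] using hrel z hz
    · push Not at hW'
      obtain ⟨z₀, hz₀, hdet⟩ := hW'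
      obtain ⟨c, hc⟩ := exists_sum_mul_eq_last_of_wronskian hU hUc ha hW hz₀ hdet
      refine ⟨Fin.snoc (-c) 1, fun h => by simpa using congrFun h (Fin.last m), fun z hz => ?_⟩
      simpa [Fin.sum_univ_castSucc, neg_add_eq_zero] using hc z hz

end Wronskian

theorem stmt_7_general (n : ℕ) (U : Set ℂ) (hUo : IsOpen U) (hUc : IsConnected U)
    (a : Fin n → ℂ → ℂ) (ha : ∀ i, AnalyticOnNhd ℂ (a i) U)
    (hs : ∀ z ∈ U, (fun j : Fin n => a j z) ≠ 0)
    (hW : ∀ z ∈ U,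
      Matrix.det (Matrix.of fun i j : Fin n => iteratedDeriv (j : ℕ) (a i) z) = 0) :
    (∃ c : Fin n → ℂ, c ≠ 0 ∧ ∀ z ∈ U, ∑ j, c j * a j z = 0) ∧
    (∃ c : Fin n → ℂ, ∃ z ∈ U, ∑ j, c j * a j z ≠ 0) := by
  refine ⟨exists_sum_mul_eq_zero_of_wronskian_eq_zero hUo hUc.isPreconnected hUc.nonempty a ha hW,
    ?_⟩
  obtain ⟨z, hz⟩ := hUc.nonempty
  obtain ⟨j, hj⟩ := Function.ne_iff.1 (hs z hz)
  exact ⟨Pi.single j 1, z, hz, by simpa [Pi.single_apply] using hj⟩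

/-- **Identically vanishing Wronskian produces a flat annihilator of the dual
connection, hence reducibility.**
In a flat frame `(𝐞_j)` for the connection on the disc/open connected set `U`,
the section `i(s) = ∑_j a_j(z) 𝐞_j` of the line subbundle `L ⊆ E` is nowhere
vanishing (`hs`), the `a_j` are holomorphic, and flat local sections of the dual
`(E^∨, ∇^∨)` are exactly the constant covectors `c ∈ (ℂⁿ)^∨`.  If the Wronskian
`Wr(a_1, …, a_n)` vanishes identically on `U`, then there is a *nonzero* constant
covector annihilating `i(s)` on `U` — a nonzero flat local section of the dual
pairing to zero with `L` — and the space of such covectors is *proper* (some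
covector does not annihilate `i(s)`); hence `(E, ∇)` is reducible. -/
theorem stmt_7 (n : ℕ) (hn : 1 ≤ n) (U : Set ℂ) (hUo : IsOpen U) (hUc : IsConnected U)
    (a : Fin n → ℂ → ℂ) (ha : ∀ i, AnalyticOnNhd ℂ (a i) U)
    (hs : ∀ z ∈ U, (fun j : Fin n => a j z) ≠ 0)
    (hW : ∀ z ∈ U,
      Matrix.det (Matrix.of fun i j : Fin n => iteratedDeriv (j : ℕ) (a i) z) = 0) :
    (∃ c : Fin n → ℂ, c ≠ 0 ∧ ∀ z ∈ U, ∑ j, c j * a j z = 0) ∧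
    (∃ c : Fin n → ℂ, ∃ z ∈ U, ∑ j, c j * a j z ≠ 0) :=
  stmt_7_general n U hUo hUc a ha hs hW
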